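/- arXiv:2001.00033 — 13 statements merged into one kernel-verified Lean document; each statement's English description precedes it below -/
import Mathlib

section
/- Let T : Matrix (Fin 4) (Fin 4) ℝ be symmetric and define the tensor X a b c d := ∑_{p,q} ε a b p q · T p c · T q d. Then: (i) for all a, b, c, d, ∑_{e,f} X a b e f · X e f c d = 2 · (det T) · (δ a c · δ b d − δ a d · δ b c); (ii) ∑_{a,b} X a b a b = 0; (iii) for all a, c, ∑_b X a b c b = 0. -/
/-- The Levi-Civita symbol on `Fin 4`: equals the sign of the permutation
`(0,1,2,3) ↦ (a,b,c,d)` when `(a,b,c,d)` is a permutation of `(0,1,2,3)`, and `0` otherwise. -/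
noncomputable def leviCivita (a b c d : Fin 4) : ℝ :=
  ((∑ σ : Equiv.Perm (Fin 4),
    if σ 0 = a ∧ σ 1 = b ∧ σ 2 = c ∧ σ 3 = d then (Equiv.Perm.sign σ : ℤ) else 0 : ℤ) : ℝ)

/-- The Kronecker delta on `Fin 4`. -/
def kronecker (a b : Fin 4) : ℝ := if a = b then 1 else 0

/-!
Contracting the lower indices of `X` with `T ⊗ T` gives
`∑ ε_{efrs} T_{pe} T_{qf} T_{cr} T_{ds} = det T · ε_{pqcd}`: by symmetry of `T` the left side is
the determinant of `T` with its rows taken in the order `(p, q, c, d)`. So (i) reduces to the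
finite identity `ε_{abpq} ε_{pqcd} = 2 (δ_{ac} δ_{bd} - δ_{ad} δ_{bc})`. The traces (ii) and (iii)
vanish because they pair `ε`, antisymmetric in its second and fourth slots, with the symmetric `T`.
-/

open Equiv Finset

theorem Finset.sum_sum_mul_eq_zero_of_antisymm_of_symm {ι R : Type*} [Fintype ι] [Ring R]
    [IsAddTorsionFree R] {f g : ι → ι → R} (hf : ∀ i j, f j i = -f i j)
    (hg : ∀ i j, g j i = g i j) : ∑ i, ∑ j, f i j * g i j = 0 := by
  refine self_eq_neg.mp ?_
  calc ∑ i, ∑ j, f i j * g i j = ∑ i, ∑ j, f j i * g j i := sum_comm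
    _ = ∑ i, ∑ j, -(f i j * g i j) :=
      sum_congr rfl fun i _ => sum_congr rfl fun j _ => by rw [hf, hg, neg_mul]
    _ = -∑ i, ∑ j, f i j * g i j := by simp only [sum_neg_distrib]

/-- An integer copy of `leviCivita`, on which finite identities can be checked by `decide`. -/
def leviCivitaInt (a b c d : Fin 4) : ℤ :=
  ∑ σ : Perm (Fin 4), if σ 0 = a ∧ σ 1 = b ∧ σ 2 = c ∧ σ 3 = d then (Perm.sign σ : ℤ) else 0

theorem leviCivita_eq_cast : leviCivita = fun a b c d => (leviCivitaInt a b c d : ℝ) := rfl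

theorem leviCivita_swap_two_four (a b c d : Fin 4) : leviCivita a d c b = -leviCivita a b c d := by
  have h : ∀ a b c d, leviCivitaInt a d c b = -leviCivitaInt a b c d := by decide
  rw [leviCivita_eq_cast]
  beta_reduce
  exact_mod_cast h a b c d

theorem leviCivita_contract (a b c d : Fin 4) :
    ∑ p, ∑ q, leviCivita a b p q * leviCivita p q c d
      = 2 * (kronecker a c * kronecker b d - kronecker a d * kronecker b c) := by
  have h : ∀ a b c d : Fin 4, ∑ p, ∑ q, leviCivitaInt a b p q * leviCivitaInt p q c d
      = 2 * ((if a = c then 1 else 0 : ℤ) * (if b = d then 1 else 0)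
        - (if a = d then 1 else 0) * (if b = c then 1 else 0)) := by
    decide
  rw [leviCivita_eq_cast]
  unfold kronecker
  beta_reduce
  exact_mod_cast h a b c d

theorem leviCivita_apply_eq_sum (k : Fin 4 → Fin 4) :
    leviCivita (k 0) (k 1) (k 2) (k 3)
      = ∑ σ : Perm (Fin 4), if ⇑σ = k then (Perm.sign σ : ℝ) else 0 := by
  simp [leviCivita, funext_iff, Fin.forall_fin_succ]

theorem sum_leviCivita_mul (F : Fin 4 → Fin 4 → Fin 4 → Fin 4 → ℝ) :
    ∑ e, ∑ f, ∑ r, ∑ s, leviCivita e f r s * F e f r s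
      = ∑ σ : Perm (Fin 4), (Perm.sign σ : ℝ) * F (σ 0) (σ 1) (σ 2) (σ 3) := by
  simp only [leviCivita, Int.cast_sum, sum_mul]
  simp only [sum_comm (t := (univ : Finset (Perm (Fin 4))))]
  refine sum_congr rfl fun σ _ => ?_
  simp [ite_and]

theorem Matrix.det_submatrix_eq_leviCivita_mul_det (A : Matrix (Fin 4) (Fin 4) ℝ)
    (k : Fin 4 → Fin 4) :
    (A.submatrix k id).det = leviCivita (k 0) (k 1) (k 2) (k 3) * A.det := by
  rw [leviCivita_apply_eq_sum]
  by_cases hk : k.Injective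
  · obtain ⟨τ, rfl⟩ : ∃ τ : Perm (Fin 4), ⇑τ = k := ⟨.ofBijective k hk.bijective_of_finite, rfl⟩
    simp [Matrix.det_permute, DFunLike.coe_fn_eq]
  · obtain ⟨i, j, hkij, hij⟩ : ∃ i j, k i = k j ∧ i ≠ j := by
      simpa [Function.Injective] using hk
    rw [Matrix.det_zero_of_row_eq hij (by ext; simp [hkij]), sum_eq_zero, zero_mul]
    rintro σ -
    rw [if_neg]
    rintro rfl
    exact hij (σ.injective hkij)

theorem sum_leviCivita_mul_entries (A : Matrix (Fin 4) (Fin 4) ℝ) (p q c d : Fin 4) :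
    ∑ e, ∑ f, ∑ r, ∑ s, leviCivita e f r s * (A p e * A q f * A c r * A d s)
      = leviCivita p q c d * A.det := by
  have h := Matrix.det_submatrix_eq_leviCivita_mul_det A ![p, q, c, d]
  rw [← Matrix.det_transpose, Matrix.det_apply'] at h
  simp only [Matrix.transpose_apply, Matrix.submatrix_apply, id, Fin.prod_univ_four] at h
  simpa [sum_leviCivita_mul] using h

noncomputable def gaussTensor (T : Matrix (Fin 4) (Fin 4) ℝ) (a b c d : Fin 4) : ℝ :=
  ∑ p, ∑ q, leviCivita a b p q * T p c * T q d

theorem sum_sum_gaussTensor_mul (T : Matrix (Fin 4) (Fin 4) ℝ) (a b : Fin 4)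
    (Y : Fin 4 → Fin 4 → ℝ) :
    ∑ e, ∑ f, gaussTensor T a b e f * Y e f
      = ∑ p, ∑ q, leviCivita a b p q * ∑ e, ∑ f, T p e * T q f * Y e f := by
  simp only [gaussTensor, sum_mul, mul_sum]
  rw [Finset.sum_comm_cycle]
  refine sum_congr rfl fun p _ => (Finset.sum_comm_cycle).trans ?_
  exact sum_congr rfl fun q _ => sum_congr rfl fun e _ => sum_congr rfl fun f _ => by ring

section gaussTensor

variable {T : Matrix (Fin 4) (Fin 4) ℝ}

theorem sum_sum_mul_gaussTensor (hT : T.IsSymm) (p q c d : Fin 4) :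
    ∑ e, ∑ f, T p e * T q f * gaussTensor T e f c d = leviCivita p q c d * T.det := by
  rw [← sum_leviCivita_mul_entries]
  simp only [gaussTensor, mul_sum]
  refine sum_congr rfl fun e _ => sum_congr rfl fun f _ => sum_congr rfl fun r _ =>
    sum_congr rfl fun s _ => ?_
  rw [hT.apply c r, hT.apply d s]
  ring

theorem gaussTensor_mul_gaussTensor (hT : T.IsSymm) (a b c d : Fin 4) :
    ∑ e, ∑ f, gaussTensor T a b e f * gaussTensor T e f c d
      = 2 * T.det * (kronecker a c * kronecker b d - kronecker a d * kronecker b c) :=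
  calc ∑ e, ∑ f, gaussTensor T a b e f * gaussTensor T e f c d
      = ∑ p, ∑ q, leviCivita a b p q * (leviCivita p q c d * T.det) := by
        simp only [sum_sum_gaussTensor_mul T a b fun e f => gaussTensor T e f c d,
          sum_sum_mul_gaussTensor hT]
    _ = T.det * ∑ p, ∑ q, leviCivita a b p q * leviCivita p q c d := by
        simp only [mul_sum]
        exact sum_congr rfl fun p _ => sum_congr rfl fun q _ => by ring
    _ = 2 * T.det * (kronecker a c * kronecker b d - kronecker a d * kronecker b c) := by
        rw [leviCivita_contract]
        ring

theorem gaussTensor_partialTrace (hT : T.IsSymm) (a c : Fin 4) :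
    ∑ b, gaussTensor T a b c b = 0 :=
  calc ∑ b, gaussTensor T a b c b = ∑ p, T p c * ∑ b, ∑ q, leviCivita a b p q * T q b := by
        simp only [gaussTensor, mul_sum]
        rw [Finset.sum_comm]
        exact sum_congr rfl fun p _ => sum_congr rfl fun b _ => sum_congr rfl fun q _ => by ring
    _ = 0 := sum_eq_zero fun p _ => by
        rw [sum_sum_mul_eq_zero_of_antisymm_of_symm (fun b q => leviCivita_swap_two_four a b p q)
          (fun b q => hT.apply q b), mul_zero]

theorem gaussTensor_trace (hT : T.IsSymm) : ∑ a, ∑ b, gaussTensor T a b a b = 0 :=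
  sum_eq_zero fun a _ => gaussTensor_partialTrace hT a a

end gaussTensor

/-- For a symmetric `4 × 4` real matrix `T` and `X_{ab}^{cd} := ε_{abpq} T^{pc} T^{qd}`:
(i) `X_{ab}^{ef} X_{ef}^{cd} = 2 (det T)(δ_a^c δ_b^d − δ_a^d δ_b^c)`;
(ii) the full trace `X_{ab}^{ab}` vanishes; (iii) the partial trace `X_{ab}^{cb}` vanishes. -/
theorem gauss_tensor_properties
    (T : Matrix (Fin 4) (Fin 4) ℝ) (hT : ∀ p q, T p q = T q p)
    (X : Fin 4 → Fin 4 → Fin 4 → Fin 4 → ℝ)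
    (hX : ∀ a b c d, X a b c d = ∑ p, ∑ q, leviCivita a b p q * T p c * T q d) :
    (∀ a b c d, ∑ e, ∑ f, X a b e f * X e f c d
        = 2 * T.det * (kronecker a c * kronecker b d - kronecker a d * kronecker b c))
    ∧ (∑ a, ∑ b, X a b a b = 0)
    ∧ (∀ a c, ∑ b, X a b c b = 0) := by
  have hTsymm : T.IsSymm := Matrix.IsSymm.ext fun i j => hT j i
  obtain rfl : X = gaussTensor T := by
    funext a b c d
    exact hX a b c d
  exact ⟨gaussTensor_mul_gaussTensor hTsymm, gaussTensor_trace hTsymm,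
    gaussTensor_partialTrace hTsymm⟩
end

section
/- Let n be a natural number and let X, Y be n×n real matrices such that X² = λ·1, Y² = μ·1 for some real numbers λ, μ, and trace X = 0 and trace Y = 0. Then trace((X+Y)³) = 0 and trace((X+Y)⁵) = 0. -/
/-!
The anticommutator `C = XY + YX` commutes with `X` and `Y` as soon as `X²` and `Y²` are scalars, and
`(X + Y)² = (λ + μ) + C`. Hence every odd power of `X + Y` is a combination of the `Cʲ X` and `Cʲ Y`.
Moving one factor `X` cyclically around the trace and commuting it past `Cʲ` gives
`tr (Cʲ⁺¹ X) = 2λ tr (Cʲ Y)` and symmetrically `tr (Cʲ⁺¹ Y) = 2μ tr (Cʲ X)`, so all these traces vanish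
once `tr X = tr Y = 0`.
-/

section Anticommutator

variable {R A : Type*} [CommSemiring R] [Semiring A] [Algebra R A] {X Y : A} {a b : R}

theorem commute_mul_add_mul_of_mul_self_eq_smul (hX : X * X = a • 1) :
    Commute X (X * Y + Y * X) := by
  change X * (X * Y + Y * X) = (X * Y + Y * X) * X
  rw [mul_add, add_mul, ← mul_assoc, hX, mul_assoc Y, hX, smul_one_mul, mul_smul_one, mul_assoc,
    add_comm]

theorem add_sq_of_mul_self_eq_smul (hX : X * X = a • 1) (hY : Y * Y = b • 1) :
    (X + Y) ^ 2 = (a + b) • 1 + (X * Y + Y * X) := by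
  rw [sq, add_mul, mul_add, mul_add, hX, hY, add_smul]
  abel

end Anticommutator

namespace Matrix

variable {n R : Type*} [Fintype n] [DecidableEq n] [CommSemiring R] {X Y : Matrix n n R} {a b : R}

theorem trace_anticomm_pow_succ_mul (hX : X * X = a • 1) (j : ℕ) :
    trace ((X * Y + Y * X) ^ (j + 1) * X) = 2 * a * trace ((X * Y + Y * X) ^ j * Y) := by
  set C := X * Y + Y * X
  have hcomm : Commute X (C ^ j) := (commute_mul_add_mul_of_mul_self_eq_smul hX).pow_right j
  have hXYX : trace (C ^ j * X * Y * X) = a * trace (C ^ j * Y) := by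
    rw [trace_mul_comm, ← mul_assoc, ← mul_assoc, hcomm.eq, mul_assoc (C ^ j) X X, hX,
      mul_smul_one, smul_mul_assoc, trace_smul, smul_eq_mul]
  rw [pow_succ, mul_assoc, add_mul, mul_add, ← mul_assoc, ← mul_assoc, mul_assoc Y, hX,
    mul_smul_one, trace_add, hXYX, mul_smul_comm, trace_smul, smul_eq_mul]
  ring

theorem trace_anticomm_pow_mul_eq_zero (hX : X * X = a • 1) (hY : Y * Y = b • 1)
    (hXtr : trace X = 0) (hYtr : trace Y = 0) (j : ℕ) :
    trace ((X * Y + Y * X) ^ j * X) = 0 ∧ trace ((X * Y + Y * X) ^ j * Y) = 0 := by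
  induction j with
  | zero => simpa using ⟨hXtr, hYtr⟩
  | succ j ih =>
    refine ⟨by rw [trace_anticomm_pow_succ_mul hX, ih.2, mul_zero], ?_⟩
    rw [add_comm, trace_anticomm_pow_succ_mul hY, add_comm, ih.1, mul_zero]

theorem trace_anticomm_pow_mul_add_pow_odd_eq_zero (hX : X * X = a • 1) (hY : Y * Y = b • 1)
    (hXtr : trace X = 0) (hYtr : trace Y = 0) (k j : ℕ) :
    trace ((X * Y + Y * X) ^ j * (X + Y) ^ (2 * k + 1)) = 0 := by
  induction k generalizing j with
  | zero =>
    obtain ⟨hjX, hjY⟩ := trace_anticomm_pow_mul_eq_zero hX hY hXtr hYtr j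
    rw [mul_zero, zero_add, pow_one, mul_add, trace_add, hjX, hjY, add_zero]
  | succ k ih =>
    rw [show 2 * (k + 1) + 1 = 2 + (2 * k + 1) by ring, pow_add, add_sq_of_mul_self_eq_smul hX hY,
      ← mul_assoc, mul_add, mul_smul_one, add_mul, smul_mul_assoc, ← pow_succ, trace_add,
      trace_smul, ih, ih, smul_zero, add_zero]

theorem trace_add_pow_odd_eq_zero (hX : X * X = a • 1) (hY : Y * Y = b • 1)
    (hXtr : trace X = 0) (hYtr : trace Y = 0) (k : ℕ) :
    trace ((X + Y) ^ (2 * k + 1)) = 0 := by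
  simpa using trace_anticomm_pow_mul_add_pow_odd_eq_zero hX hY hXtr hYtr k 0

end Matrix

/-- If `X² = λ·1`, `Y² = μ·1` and `trace X = trace Y = 0` for `n × n` real matrices,
then `trace((X+Y)³) = 0` and `trace((X+Y)⁵) = 0`. -/
theorem trace_odd_powers_sum_of_sq_scalar
    (n : ℕ) (X Y : Matrix (Fin n) (Fin n) ℝ) (lam mu : ℝ)
    (hX2 : X ^ 2 = lam • (1 : Matrix (Fin n) (Fin n) ℝ))
    (hY2 : Y ^ 2 = mu • (1 : Matrix (Fin n) (Fin n) ℝ))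
    (hXtr : X.trace = 0) (hYtr : Y.trace = 0) :
    ((X + Y) ^ 3).trace = 0 ∧ ((X + Y) ^ 5).trace = 0 := by
  rw [sq] at hX2 hY2
  exact ⟨Matrix.trace_add_pow_odd_eq_zero hX2 hY2 hXtr hYtr 1,
    Matrix.trace_add_pow_odd_eq_zero hX2 hY2 hXtr hYtr 2⟩
end

section
/- Let P be a 6×6 real matrix with trace P = 0, trace (P³) = 0 and trace (P⁵) = 0. Then trace (P^(2k+1)) = 0 for every natural number k. -/
/-!
Over `ℂ`, the trace of `P ^ k` is the `k`-th power sum of the eigenvalues counted with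
multiplicity (sum over generalized eigenspaces). By Newton's identities, vanishing of the odd
power sums up to the number `6` of eigenvalues, i.e. `p₁ = p₃ = p₅ = 0`, forces all odd
elementary symmetric functions to vanish. Then `∏ (X + λ) = ∏ (X - λ)`, so the eigenvalues are
symmetric under `λ ↦ -λ`, and every odd power sum vanishes.
-/

open Finset Polynomial Module

section PowerSums

variable {R : Type*} [CommRing R]

theorem Multiset.mul_esymm_eq_sum_map_pow (s : Multiset R) (k : ℕ) :
    k * s.esymm k = (-1) ^ (k + 1) *
      ∑ a ∈ HasAntidiagonal.antidiagonal k with a.1 < k,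
        (-1) ^ a.1 * s.esymm a.1 * (s.map (· ^ a.2)).sum := by
  classical
  obtain ⟨σ, _, x, rfl⟩ : ∃ (σ : Type _) (_ : Fintype σ) (x : σ → R), univ.val.map x = s :=
    ⟨s, inferInstance, (↑), s.map_univ_coe⟩
  have h := congrArg (MvPolynomial.aeval (R := ℤ) x) (MvPolynomial.mul_esymm_eq_sum σ ℤ k)
  simpa [MvPolynomial.aeval_esymm_eq_multiset_esymm, MvPolynomial.psum, Multiset.map_map]
    using h

theorem Multiset.esymm_eq_zero_of_card_lt (s : Multiset R) {k : ℕ} (hk : card s < k) :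
    s.esymm k = 0 := by
  simp [Multiset.esymm, Multiset.powersetCard_eq_empty k hk]

theorem Multiset.map_neg_eq_self_of_esymm_eq_zero [IsDomain R] (s : Multiset R)
    (h : ∀ k, Odd k → s.esymm k = 0) : s.map Neg.neg = s := by
  have hesymm (k : ℕ) : (s.map Neg.neg).esymm k = s.esymm k := by
    rw [Multiset.esymm_neg]
    rcases Nat.even_or_odd k with heven | hodd
    · rw [heven.neg_one_pow, one_mul]
    · rw [h k hodd, mul_zero]
  have hprod : ((s.map Neg.neg).map (fun r => X + C r)).prod = (s.map fun r => X + C r).prod := by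
    simp only [Multiset.prod_X_add_C_eq_sum_esymm, Multiset.card_map, hesymm]
  calc s.map Neg.neg = (s.map fun r => X + C r).prod.roots := by
        simpa [Multiset.map_map, Function.comp_def, sub_eq_add_neg] using
          (roots_multiset_prod_X_sub_C (s.map Neg.neg)).symm
    _ = ((s.map Neg.neg).map (fun r => X + C r)).prod.roots := by rw [hprod]
    _ = s := by
        simpa [Multiset.map_map, Function.comp_def, sub_eq_add_neg] using
          roots_multiset_prod_X_sub_C s

variable {K : Type*} [Field K] [CharZero K]

theorem Multiset.esymm_eq_zero_of_odd_of_sum_map_pow_eq_zero (s : Multiset K)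
    (hs : ∀ k, Odd k → k ≤ card s → (s.map (· ^ k)).sum = 0) {k : ℕ} (hk : Odd k) :
    s.esymm k = 0 := by
  induction k using Nat.strong_induction_on with
  | _ k ih =>
  rcases lt_or_ge (card s) k with hlt | hle
  · exact s.esymm_eq_zero_of_card_lt hlt
  -- In each Newton summand `e_i p_j` with `i + j = k` odd, either `j` or `i < k` is odd.
  have hterm : ∀ a ∈ {a ∈ HasAntidiagonal.antidiagonal k | a.1 < k},
      (-1) ^ a.1 * s.esymm a.1 * (s.map (· ^ a.2)).sum = 0 := by
    intro a ha
    obtain ⟨hsum, hlt⟩ : a.1 + a.2 = k ∧ a.1 < k := by simpa using ha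
    rcases Nat.even_or_odd a.2 with heven | hodd
    · have : Odd a.1 := by
        rw [← hsum] at hk
        exact (Nat.odd_add.mp hk).mpr heven
      rw [ih a.1 hlt this, mul_zero, zero_mul]
    · rw [hs a.2 hodd (by omega), mul_zero]
  have h := s.mul_esymm_eq_sum_map_pow k
  rw [Finset.sum_eq_zero hterm, mul_zero] at h
  exact (mul_eq_zero.mp h).resolve_left (by exact_mod_cast hk.pos.ne')

theorem Multiset.sum_map_pow_eq_zero_of_map_neg_eq_self (s : Multiset K)
    (hs : s.map Neg.neg = s) {k : ℕ} (hk : Odd k) : (s.map (· ^ k)).sum = 0 := by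
  have h : (s.map (· ^ k)).sum = -(s.map (· ^ k)).sum := by
    conv_lhs => rw [← hs]
    simp [Multiset.map_map, hk.neg_pow, Multiset.sum_map_neg]
  linear_combination h / 2

theorem Multiset.sum_map_pow_eq_zero_of_odd (s : Multiset K)
    (hs : ∀ k, Odd k → k ≤ card s → (s.map (· ^ k)).sum = 0) {k : ℕ} (hk : Odd k) :
    (s.map (· ^ k)).sum = 0 :=
  s.sum_map_pow_eq_zero_of_map_neg_eq_self
    (s.map_neg_eq_self_of_esymm_eq_zero fun _ hj =>
      s.esymm_eq_zero_of_odd_of_sum_map_pow_eq_zero hs hj) hk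

end PowerSums

section TracePowers

theorem LinearMap.trace_pow_eq_of_isNilpotent_sub_algebraMap {R M : Type*} [CommRing R]
    [IsReduced R] [AddCommGroup M] [Module R M] [Module.Free R M] [Module.Finite R M]
    {g : End R M} (μ : R) (hg : IsNilpotent (g - algebraMap R _ μ)) (k : ℕ) :
    trace R M (g ^ k) = finrank R M * μ ^ k := by
  induction k with
  | zero => simp
  | succ k ih =>
    rw [pow_succ, End.mul_eq_comp,
      trace_comp_eq_mul_of_commute_of_isNilpotent μ ((Commute.refl g).pow_left k) hg, ih]
    ring

variable {K V : Type*} [Field K] [AddCommGroup V] [Module K V] [FiniteDimensional K V]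

theorem Module.End.isNilpotent_restrict_sub_algebraMap_maxGenEigenspace (f : End K V) (μ : K) :
    IsNilpotent (f.restrict (f.mapsTo_maxGenEigenspace_of_comm rfl μ) - algebraMap K _ μ) := by
  convert f.isNilpotent_restrict_maxGenEigenspace_sub_algebraMap μ using 1
  ext
  rfl

theorem LinearMap.exists_multiset_trace_pow_eq_sum [IsAlgClosed K] (f : End K V) :
    ∃ Λ : Multiset K, ∀ k : ℕ, trace K V (f ^ k) = (Λ.map (· ^ k)).sum := by
  classical
  have hfin : {μ | f.maxGenEigenspace μ ≠ ⊥}.Finite :=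
    WellFoundedGT.finite_ne_bot_of_iSupIndep f.independent_maxGenEigenspace
  have hint : DirectSum.IsInternal f.maxGenEigenspace :=
    DirectSum.isInternal_submodule_of_iSupIndep_of_iSup_eq_top
      f.independent_maxGenEigenspace f.iSup_maxGenEigenspace_eq_top
  refine ⟨∑ μ ∈ hfin.toFinset, Multiset.replicate (finrank K (f.maxGenEigenspace μ)) μ,
    fun k => ?_⟩
  rw [trace_eq_sum_trace_restrict' hint hfin
    (fun μ => f.mapsTo_maxGenEigenspace_of_comm ((Commute.refl f).pow_right k) μ)]
  simp only [← End.pow_restrict _ (f.mapsTo_maxGenEigenspace_of_comm rfl _),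
    trace_pow_eq_of_isNilpotent_sub_algebraMap _
      (f.isNilpotent_restrict_sub_algebraMap_maxGenEigenspace _)]
  rw [← Multiset.coe_mapAddMonoidHom, map_sum, ← Multiset.coe_sumAddMonoidHom, map_sum]
  simp [Multiset.sum_replicate]

end TracePowers

theorem Matrix.exists_multiset_trace_pow_eq_sum {n K : Type*} [Fintype n] [DecidableEq n]
    [Field K] [IsAlgClosed K] (A : Matrix n n K) :
    ∃ Λ : Multiset K, ∀ k : ℕ, (A ^ k).trace = (Λ.map (· ^ k)).sum := by
  obtain ⟨Λ, hΛ⟩ := A.toLin'.exists_multiset_trace_pow_eq_sum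
  exact ⟨Λ, fun k => by rw [← hΛ, ← Matrix.toLin'_pow, Matrix.trace_toLin'_eq]⟩

/-- If a `6 × 6` real matrix `P` satisfies `trace P = trace P³ = trace P⁵ = 0`,
then all odd power traces `trace P^(2k+1)` vanish. -/
theorem trace_all_odd_powers_vanish
    (P : Matrix (Fin 6) (Fin 6) ℝ)
    (h1 : P.trace = 0) (h3 : (P ^ 3).trace = 0) (h5 : (P ^ 5).trace = 0) :
    ∀ k : ℕ, (P ^ (2 * k + 1)).trace = 0 := by
  obtain ⟨Λ, htrace⟩ := (P.map Complex.ofRealHom).exists_multiset_trace_pow_eq_sum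
  have hpow (k : ℕ) : ((P ^ k).trace : ℂ) = (Λ.map (· ^ k)).sum := by
    rw [← htrace, ← Matrix.map_pow, ← AddMonoidHom.map_trace]
    rfl
  have hcard : Multiset.card Λ = 6 := by
    have h0 := hpow 0
    simp only [pow_zero, Matrix.trace_one, Multiset.map_const', Multiset.sum_replicate,
      nsmul_eq_mul, mul_one, Fintype.card_fin] at h0
    exact_mod_cast h0.symm
  have hlow : ∀ k, Odd k → k ≤ Multiset.card Λ → (Λ.map (· ^ k)).sum = 0 := by
    rintro k ⟨j, rfl⟩ hk
    have hj : j ≤ 2 := by omega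
    rw [← hpow]
    interval_cases j <;> simp [h1, h3, h5]
  intro k
  exact_mod_cast (hpow _).trans (Λ.sum_map_pow_eq_zero_of_odd hlow (odd_two_mul_add_one k))
end

section
/- Let K be a 4×4 real matrix whose characteristic polynomial is x⁴ − σ₁x³ + σ₂x² − σ₃x + σ₄, and set T := K² − σ₁·K. Then trace T = −2σ₂, trace (T²) = 2σ₂² − 2σ₁σ₃ − 4σ₄, and trace (T³) = −2σ₂³ − 3σ₁²σ₄ + 3σ₁σ₂σ₃ + 3σ₃² + 6σ₂σ₄. -/
/-!
Write `c₁, c₂, c₃` for the coefficients of `charpolyRev K = det (1 - X K)`; under the hypothesis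
they are `-σ₁, σ₂, -σ₃`. Newton's identities express `tr K`, `tr K²`, `tr K³` through them.
They come from factoring `1 - Xᵏ Kᵏ = ∏_{ζᵏ = 1} (1 - ζ X K)`: taking determinants,
`det (1 - Xᵏ Kᵏ) = ∏_ζ charpolyRev K (ζ X)`, and the coefficient of `Xᵏ` on the left is `-tr Kᵏ`.
For `k = 3` the cube root of unity is a root of `X² + X + 1` adjoined to the base ring.
Cayley–Hamilton then determines every `tr Kᵐ` from the first four, and the traces of the powers
of `T = K² - σ₁ K` are binomial combinations of `tr Kᵐ` for `m ≤ 6`.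
-/

open Polynomial Matrix

namespace Polynomial

variable {R : Type*} [CommRing R]

theorem coeff_two_mul_comp_neg_X (f : R[X]) :
    (f * f.comp (-X)).coeff 2 = 2 * f.coeff 0 * f.coeff 2 - f.coeff 1 ^ 2 := by
  rw [show (-X : R[X]) = C (-1) * X by simp]
  simp only [coeff_mul, Finset.Nat.sum_antidiagonal_succ, Finset.Nat.antidiagonal_zero,
    Finset.sum_singleton, comp_C_mul_X_coeff]
  ring

theorem coeff_three_mul_comp_mul_comp {ω : R} (hω : ω ^ 2 + ω + 1 = 0) (f : R[X]) :
    (f * (f.comp (C ω * X) * f.comp (C (ω ^ 2) * X))).coeff 3 =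
      3 * f.coeff 0 ^ 2 * f.coeff 3 - 3 * f.coeff 0 * f.coeff 1 * f.coeff 2 + f.coeff 1 ^ 3 := by
  have hω3 : ω ^ 3 = 1 := by linear_combination (ω - 1) * hω
  simp only [coeff_mul, Finset.Nat.sum_antidiagonal_succ, Finset.Nat.antidiagonal_zero,
    Finset.sum_singleton, comp_C_mul_X_coeff]
  -- modulo `ω³ = 1`, the `ω`-weights of `f₀²f₃`, `f₀f₁f₂`, `f₁³` sum to `3`, `3ω + 3ω² = -3`, `1`
  linear_combination (f.coeff 0 * f.coeff 1 * f.coeff 2) * (3 * hω + (2 * ω + ω ^ 2) * hω3) +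
    (f.coeff 0 ^ 2 * f.coeff 3 * (ω ^ 3 + 2) + f.coeff 1 ^ 3) * hω3

end Polynomial

theorem AdjoinRoot.of_injective_of_monic {R : Type*} [CommRing R] {f : R[X]} (hf : f.Monic)
    (hdeg : 0 < f.natDegree) : Function.Injective (AdjoinRoot.of f) := by
  refine (injective_iff_map_eq_zero _).2 fun r hr ↦ by_contra fun h ↦ ?_
  exact AdjoinRoot.mk_ne_zero_of_natDegree_lt hf (C_ne_zero.2 h) (by rwa [natDegree_C]) hr

namespace Matrix

variable {R : Type*} [CommRing R] {n : Type*} [Fintype n] [DecidableEq n] (M : Matrix n n R)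

theorem charpolyRev_comp (q : R[X]) : M.charpolyRev.comp q = det (1 - q • M.map C) := by
  rw [charpolyRev, comp_eq_aeval, AlgHom.map_det]
  congr 1
  refine Matrix.ext fun i j ↦ ?_
  by_cases h : i = j <;> simp [h, mul_comm q]

theorem charpolyRev_map {S : Type*} [CommRing S] (φ : R →+* S) :
    (M.map φ).charpolyRev = M.charpolyRev.map φ := by
  simp only [charpolyRev, ← coe_mapRingHom, RingHom.map_det]
  congr 1
  refine Matrix.ext fun i j ↦ ?_
  by_cases h : i = j <;> simp [h]

theorem coeff_charpolyRev_eq_coeff_charpoly [Nontrivial R] {i : ℕ} (hi : i ≤ Fintype.card n) :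
    M.charpolyRev.coeff i = M.charpoly.coeff (Fintype.card n - i) := by
  rw [← reverse_charpoly, coeff_reverse, charpoly_natDegree_eq_dim, revAt_le hi]

theorem coeff_expand_charpolyRev {k : ℕ} (hk : 0 < k) :
    (expand R k M.charpolyRev).coeff k = -M.trace := by
  simpa using coeff_expand_mul' hk M.charpolyRev 1

theorem expand_charpolyRev_pow_eq_prod {k : ℕ} (ζ : List R)
    (hζ : (ζ.map fun z ↦ 1 - C z * X).prod = 1 - X ^ k) :
    expand R k (M ^ k).charpolyRev = (ζ.map fun z ↦ M.charpolyRev.comp (C z * X)).prod := by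
  have h := congrArg (aeval ((X : R[X]) • M.map C)) hζ
  simp only [map_list_prod, List.map_map, Function.comp_def, map_sub, map_one, map_mul, aeval_C,
    aeval_X, map_pow, Algebra.algebraMap_eq_smul_one, smul_mul_assoc, one_mul, _root_.smul_pow,
    ← Matrix.map_pow] at h
  simp only [charpolyRev_comp, expand_eq_comp_X_pow, ← coe_detMonoidHom, C_mul', smul_assoc]
  rw [← h, map_list_prod, List.map_map]
  rfl

theorem trace_sq_eq_coeff_charpolyRev :
    (M ^ 2).trace = M.charpolyRev.coeff 1 ^ 2 - 2 * M.charpolyRev.coeff 2 := by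
  have h := M.expand_charpolyRev_pow_eq_prod (k := 2) [1, -1] (by
    simp only [List.map_cons, List.map_nil, List.prod_cons, List.prod_nil, C_1, map_neg]
    ring)
  simp only [List.map_cons, List.map_nil, List.prod_cons, List.prod_nil, mul_one, C_1, one_mul,
    comp_X, map_neg, neg_one_mul] at h
  have := (M ^ 2).coeff_expand_charpolyRev two_pos
  rw [h, coeff_two_mul_comp_neg_X, coeff_zero_eq_eval_zero, eval_charpolyRev] at this
  linear_combination this

theorem trace_pow_three_eq_coeff_charpolyRev_of_sq_add_add_one {ω : R}
    (hω : ω ^ 2 + ω + 1 = 0) :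
    (M ^ 3).trace = -M.charpolyRev.coeff 1 ^ 3 + 3 * M.charpolyRev.coeff 1 * M.charpolyRev.coeff 2
      - 3 * M.charpolyRev.coeff 3 := by
  have hωC : C ω ^ 2 + C ω + 1 = 0 := by simpa using congrArg C hω
  have h := M.expand_charpolyRev_pow_eq_prod (k := 3) [1, ω, ω ^ 2] (by
    simp only [List.map_cons, List.map_nil, List.prod_cons, List.prod_nil, C_1, map_pow]
    linear_combination (-X + C ω * X ^ 2 + (1 - C ω) * X ^ 3) * hωC)
  simp only [List.map_cons, List.map_nil, List.prod_cons, List.prod_nil, mul_one, C_1, one_mul,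
    comp_X] at h
  have := (M ^ 3).coeff_expand_charpolyRev three_pos
  rw [h, coeff_three_mul_comp_mul_comp hω, coeff_zero_eq_eval_zero, eval_charpolyRev] at this
  linear_combination this

theorem trace_pow_three_eq_coeff_charpolyRev :
    (M ^ 3).trace = -M.charpolyRev.coeff 1 ^ 3 + 3 * M.charpolyRev.coeff 1 * M.charpolyRev.coeff 2
      - 3 * M.charpolyRev.coeff 3 := by
  nontriviality R
  have hf : (X ^ 2 + X + 1 : R[X]).Monic := by monicity!
  have hdeg : (X ^ 2 + X + 1 : R[X]).natDegree = 2 := by compute_degree!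
  have hω : AdjoinRoot.root (X ^ 2 + X + 1 : R[X]) ^ 2 + AdjoinRoot.root _ + 1 = 0 := by
    have := AdjoinRoot.eval₂_root (X ^ 2 + X + 1 : R[X])
    rwa [eval₂_add, eval₂_add, eval₂_X_pow, eval₂_X, eval₂_one] at this
  apply AdjoinRoot.of_injective_of_monic hf (by rw [hdeg]; exact two_pos)
  simpa [charpolyRev_map, ← Matrix.map_pow, AddMonoidHom.map_trace, map_ofNat] using
    (M.map (AdjoinRoot.of _)).trace_pow_three_eq_coeff_charpolyRev_of_sq_add_add_one hω

theorem trace_sq_sub_smul_pow (s : R) (m : ℕ) :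
    ((M ^ 2 - s • M) ^ m).trace =
      ∑ j ∈ Finset.range (m + 1), m.choose j * (-s) ^ j * (M ^ (j + 2 * (m - j))).trace := by
  have hc : Commute ((-s) • M) (M ^ 2) := (Commute.self_pow M 2).smul_left _
  rw [sub_eq_neg_add, ← neg_smul, hc.add_pow, trace_sum]
  refine Finset.sum_congr rfl fun j _ ↦ ?_
  rw [_root_.smul_pow, smul_mul_assoc, ← pow_mul, ← pow_add, ← nsmul_eq_mul', trace_smul,
    trace_smul, nsmul_eq_mul, smul_eq_mul, mul_assoc]

section Quartic

variable {a b c d : R}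
  (hM : M.charpoly = X ^ 4 - C a * X ^ 3 + C b * X ^ 2 - C c * X + C d)
include hM

theorem card_eq_four_of_charpoly_eq [Nontrivial R] : Fintype.card n = 4 := by
  rw [← M.charpoly_natDegree_eq_dim, hM]
  compute_degree!

theorem traces_of_charpoly_eq [Nontrivial R] :
    M.trace = a ∧ (M ^ 2).trace = a ^ 2 - 2 * b ∧ (M ^ 3).trace = a ^ 3 - 3 * a * b + 3 * c := by
  have hn := M.card_eq_four_of_charpoly_eq hM
  have r1 : M.charpolyRev.coeff 1 = -a := by
    simpa [hn, hM] using M.coeff_charpolyRev_eq_coeff_charpoly (i := 1) (by lia)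
  have r2 : M.charpolyRev.coeff 2 = b := by
    simpa [hn, hM] using M.coeff_charpolyRev_eq_coeff_charpoly (i := 2) (by lia)
  have r3 : M.charpolyRev.coeff 3 = -c := by
    simpa [hn, hM] using M.coeff_charpolyRev_eq_coeff_charpoly (i := 3) (by lia)
  refine ⟨by simpa [r1, eq_comm] using M.coeff_charpolyRev_eq_neg_trace, ?_, ?_⟩
  · rw [trace_sq_eq_coeff_charpolyRev, r1, r2]; ring
  · rw [trace_pow_three_eq_coeff_charpolyRev, r1, r2, r3]; ring

theorem trace_pow_add_four_of_charpoly_eq (k : ℕ) :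
    (M ^ (k + 4)).trace = a * (M ^ (k + 3)).trace - b * (M ^ (k + 2)).trace
      + c * (M ^ (k + 1)).trace - d * (M ^ k).trace := by
  have h := congrArg (fun A ↦ (M ^ k * A).trace) M.aeval_self_charpoly
  simp only [hM, map_add, map_sub, map_mul, map_pow, aeval_X, aeval_C,
    Algebra.algebraMap_eq_smul_one, smul_mul_assoc, one_mul, mul_smul_comm, mul_one, mul_add,
    mul_sub, ← pow_add, ← pow_succ, trace_add, trace_sub, trace_smul, smul_eq_mul, mul_zero,
    trace_zero] at h
  linear_combination h

end Quartic

end Matrix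

/-- If the characteristic polynomial of a `4 × 4` real matrix `K` is
`x⁴ − σ₁x³ + σ₂x² − σ₃x + σ₄` and `T = K² − σ₁K`, then
`trace T = −2σ₂`, `trace T² = 2σ₂² − 2σ₁σ₃ − 4σ₄` and
`trace T³ = −2σ₂³ − 3σ₁²σ₄ + 3σ₁σ₂σ₃ + 3σ₃² + 6σ₂σ₄`. -/
theorem traces_of_T_from_charpoly
    (K : Matrix (Fin 4) (Fin 4) ℝ) (s1 s2 s3 s4 : ℝ)
    (hK : K.charpoly =
      X ^ 4 - C s1 * X ^ 3 + C s2 * X ^ 2 - C s3 * X + C s4) :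
    (K ^ 2 - s1 • K).trace = -2 * s2 ∧
    ((K ^ 2 - s1 • K) ^ 2).trace = 2 * s2 ^ 2 - 2 * s1 * s3 - 4 * s4 ∧
    ((K ^ 2 - s1 • K) ^ 3).trace =
      -2 * s2 ^ 3 - 3 * s1 ^ 2 * s4 + 3 * s1 * s2 * s3 + 3 * s3 ^ 2 + 6 * s2 * s4 := by
  obtain ⟨p1, p2, p3⟩ := K.traces_of_charpoly_eq hK
  have p4 := K.trace_pow_add_four_of_charpoly_eq hK 0
  have p5 := K.trace_pow_add_four_of_charpoly_eq hK 1
  have p6 := K.trace_pow_add_four_of_charpoly_eq hK 2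
  simp only [trace_sq_sub_smul_pow, Finset.sum_range_succ, Finset.sum_range_zero]
  norm_num at p4 p5 p6 ⊢
  rw [p6, p5, p4, p3, p2, p1]
  exact ⟨by ring, by ring, by ring⟩
end

section
/- Let m > 0 and consider the function ρ(r) = 4m·√(1 − 2m/r) on the interval r > 2m. Then ρ is differentiable there and for every r > 2m, (ρ'(r))² + ((2m/r)³ + (2m/r)² + (2m/r)) + 1 = (1 − 2m/r)⁻¹. -/
/-! Writing `x = 2m/r`, the chain rule gives `ρ' = x² / √(1 - x)`, so `ρ'² = x⁴ / (1 - x)`, and the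
identity is the finite geometric sum `(1 - x)(1 + x + x² + x³) = 1 - x⁴`. -/

open Real

lemma hasDerivAt_one_sub_div (c : ℝ) {r : ℝ} (hr : r ≠ 0) :
    HasDerivAt (fun s : ℝ => 1 - c / s) (c / r ^ 2) r := by
  have h := ((hasDerivAt_inv hr).const_mul c).const_sub 1
  simp only [← div_eq_mul_inv] at h
  exact h.congr_deriv (by ring)

lemma hasDerivAt_mul_sqrt_one_sub_div (m : ℝ) {r : ℝ} (hr : r ≠ 0) (hu : 0 < 1 - 2 * m / r) :
    HasDerivAt (fun s : ℝ => 4 * m * √(1 - 2 * m / s)) ((2 * m / r) ^ 2 / √(1 - 2 * m / r)) r := by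
  have hs : √(1 - 2 * m / r) ≠ 0 := (sqrt_pos.mpr hu).ne'
  refine (((hasDerivAt_one_sub_div (2 * m) hr).sqrt hu.ne').const_mul (4 * m)).congr_deriv ?_
  field_simp
  ring

lemma pow_four_div_one_sub_add_geom_sum {x : ℝ} (hx : x ≠ 1) :
    x ^ 4 / (1 - x) + (x ^ 3 + x ^ 2 + x) + 1 = (1 - x)⁻¹ := by
  have h : 1 - x ≠ 0 := sub_ne_zero.mpr hx.symm
  field_simp
  ring

/-- The radial part of the Fronsdal-type embedding of the Euclidean Schwarzschild metric:
with `ρ(r) = 4m√(1 − 2m/r)` on `r > 2m`, `ρ` is differentiable and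
`ρ'² + ((2m/r)³ + (2m/r)² + (2m/r)) + 1 = (1 − 2m/r)⁻¹`. -/
theorem schwarzschild_fronsdal_radial
    (m : ℝ) (hm : 0 < m) :
    ∀ r : ℝ, 2 * m < r →
      DifferentiableAt ℝ (fun s : ℝ => 4 * m * Real.sqrt (1 - 2 * m / s)) r ∧
      (deriv (fun s : ℝ => 4 * m * Real.sqrt (1 - 2 * m / s)) r) ^ 2
        + ((2 * m / r) ^ 3 + (2 * m / r) ^ 2 + (2 * m / r)) + 1
        = (1 - 2 * m / r)⁻¹ := by
  intro r hr
  have hr0 : 0 < r := by linarith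
  have hx : 2 * m / r < 1 := (div_lt_one hr0).mpr hr
  have hu : 0 < 1 - 2 * m / r := sub_pos.mpr hx
  have hρ := hasDerivAt_mul_sqrt_one_sub_div m hr0.ne' hu
  refine ⟨hρ.differentiableAt, ?_⟩
  rw [hρ.deriv, div_pow, ← pow_mul, sq_sqrt hu.le]
  exact pow_four_div_one_sub_add_geom_sum hx.ne
end

section
/- The function g(r) = −2/(r(r²+1)) is differentiable on r > 0 and satisfies, for every r > 0, the differential equation −r·(−3 + (r³+r)·g(r))·(r²+1)²·g'(r) + r²·(r²+1)³·g(r)³ + (−2r⁷ + 6r³ + 4r)·g(r)² + (3r⁴ + 12r² + 9)·g(r) − 16r = 0. -/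
theorem hasDerivAt_neg_two_div_mul_sq_add_one {r : ℝ} (hr : r ≠ 0) :
    HasDerivAt (fun s : ℝ => -2 / (s * (s ^ 2 + 1)))
      (2 * (3 * r ^ 2 + 1) / (r * (r ^ 2 + 1)) ^ 2) r := by
  have hden : HasDerivAt (fun s : ℝ => s * (s ^ 2 + 1)) (3 * r ^ 2 + 1) r :=
    ((hasDerivAt_id' r).mul ((hasDerivAt_pow 2 r).add_const 1)).congr_deriv (by ring)
  exact ((hasDerivAt_const r (-2 : ℝ)).div hden (by positivity)).congr_deriv (by ring)

/-- The function `g(r) = −2/(r(r²+1))` is differentiable for `r > 0` and solves the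
first Yakupov–Agaoka obstruction ODE `Φ₃ = 0` for radial conformal rescalings of the
Fubini–Study metric. -/
theorem agaoka_ode_solution :
    ∀ r : ℝ, 0 < r →
      DifferentiableAt ℝ (fun s : ℝ => -2 / (s * (s ^ 2 + 1))) r ∧
      -r * (-3 + (r ^ 3 + r) * (-2 / (r * (r ^ 2 + 1)))) * (r ^ 2 + 1) ^ 2
          * deriv (fun s : ℝ => -2 / (s * (s ^ 2 + 1))) r
        + r ^ 2 * (r ^ 2 + 1) ^ 3 * (-2 / (r * (r ^ 2 + 1))) ^ 3
        + (-2 * r ^ 7 + 6 * r ^ 3 + 4 * r) * (-2 / (r * (r ^ 2 + 1))) ^ 2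
        + (3 * r ^ 4 + 12 * r ^ 2 + 9) * (-2 / (r * (r ^ 2 + 1)))
        - 16 * r = 0 := by
  intro r hr
  have hr₀ : r ≠ 0 := hr.ne'
  have hg := hasDerivAt_neg_two_div_mul_sq_add_one hr₀
  refine ⟨hg.differentiableAt, ?_⟩
  rw [hg.deriv]
  field_simp
  ring
end

section
/- For every real r, with Ω(r) = 1/(1+4r²), R(r) = r/(1+4r²), Z(r) = 1/(2(1+4r²)), the functions R and Z are differentiable and (R'(r))² + (Z'(r))² = Ω(r)². Moreover R(r)² = 4·Ω(r)²·c(r) and Z(r)² = Ω(r)²·(b(r) − c(r)) with b(r) = (r²+1)/4 and c(r) = r²/4. -/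
/-! The derivatives are `R' = (1 - 4r²)/(1 + 4r²)²` and `Z' = -4r/(1 + 4r²)²`, so `R'² + Z'² = Ω²`
is the Pythagorean identity `(1 - 4r²)² + (4r)² = (1 + 4r²)²`. -/

lemma one_add_four_mul_sq_pos (r : ℝ) : 0 < 1 + 4 * r ^ 2 := by positivity

lemma hasDerivAt_one_add_four_mul_sq (r : ℝ) :
    HasDerivAt (fun s : ℝ => 1 + 4 * s ^ 2) (8 * r) r :=
  (((hasDerivAt_pow 2 r).const_mul 4).const_add 1).congr_deriv (by push_cast; ring)

lemma hasDerivAt_div_one_add_four_mul_sq (r : ℝ) :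
    HasDerivAt (fun s : ℝ => s / (1 + 4 * s ^ 2))
      ((1 - 4 * r ^ 2) / (1 + 4 * r ^ 2) ^ 2) r :=
  ((hasDerivAt_id' r).div (hasDerivAt_one_add_four_mul_sq r)
    (one_add_four_mul_sq_pos r).ne').congr_deriv (by ring)

lemma hasDerivAt_one_div_two_mul_one_add_four_mul_sq (r : ℝ) :
    HasDerivAt (fun s : ℝ => 1 / (2 * (1 + 4 * s ^ 2)))
      (-(4 * r) / (1 + 4 * r ^ 2) ^ 2) r := by
  have hpos := one_add_four_mul_sq_pos r
  refine ((hasDerivAt_const r (1 : ℝ)).div ((hasDerivAt_one_add_four_mul_sq r).const_mul 2)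
    (by positivity)).congr_deriv ?_
  field_simp
  ring

/-- The second radial conformal embedding of the Burns metric into flat `ℝ⁷`:
with `Ω = 1/(1+4r²)`, `R = r/(1+4r²)`, `Z = 1/(2(1+4r²))`, one has
`R'² + Z'² = Ω²`, `R² = 4Ω²c` and `Z² = Ω²(b−c)` where `b = (r²+1)/4`, `c = r²/4`. -/
theorem burns_second_conformal_embedding :
    ∀ r : ℝ,
      DifferentiableAt ℝ (fun s : ℝ => s / (1 + 4 * s ^ 2)) r ∧
      DifferentiableAt ℝ (fun s : ℝ => 1 / (2 * (1 + 4 * s ^ 2))) r ∧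
      (deriv (fun s : ℝ => s / (1 + 4 * s ^ 2)) r) ^ 2
          + (deriv (fun s : ℝ => 1 / (2 * (1 + 4 * s ^ 2))) r) ^ 2
        = (1 / (1 + 4 * r ^ 2)) ^ 2 ∧
      (r / (1 + 4 * r ^ 2)) ^ 2
        = 4 * (1 / (1 + 4 * r ^ 2)) ^ 2 * (r ^ 2 / 4) ∧
      (1 / (2 * (1 + 4 * r ^ 2))) ^ 2
        = (1 / (1 + 4 * r ^ 2)) ^ 2 * ((r ^ 2 + 1) / 4 - r ^ 2 / 4) := by
  intro r
  have hR := hasDerivAt_div_one_add_four_mul_sq r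
  have hZ := hasDerivAt_one_div_two_mul_one_add_four_mul_sq r
  have hne := (one_add_four_mul_sq_pos r).ne'
  have pythagoras : (1 - 4 * r ^ 2) ^ 2 + (4 * r) ^ 2 = (1 + 4 * r ^ 2) ^ 2 := by ring
  refine ⟨hR.differentiableAt, hZ.differentiableAt, ?_, ?_, ?_⟩
  · rw [hR.deriv, hZ.deriv, div_pow, neg_div, neg_sq, div_pow, ← add_div, pythagoras]
    field_simp
  · field_simp
  · field_simp
    ring
end

section
/- For every real r, with Ω(r) = (r²+1)/(r²+4), R(r) = r/(r²+4), Z(r) = r²/(2(r²+4)), the functions R and Z are differentiable and (R'(r))² + (Z'(r))² = 1/(r²+4)² = Ω(r)²·a(r), where a(r) = 1/(1+r²)². Moreover R(r)² = 4·Ω(r)²·c(r) and Z(r)² = Ω(r)²·(b(r) − c(r)) with b(r) = r²/(4(1+r²)) and c(r) = r²/(4(1+r²)²). -/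
/-! `R = r/(r²+4)` and `Z = r²/(2(r²+4)) = 1/2 - 2/(r²+4)` have derivatives `(4 - r²)/(r²+4)²` and
`4r/(r²+4)²`, and `(4 - r²)² + (4r)² = (r²+4)²`; every other identity is rational-function
algebra, valid because `r²+4` and `1+r²` never vanish. -/

lemma hasDerivAt_div_sq_add {c : ℝ} (hc : 0 < c) (r : ℝ) :
    HasDerivAt (fun s : ℝ => s / (s ^ 2 + c)) ((c - r ^ 2) / (r ^ 2 + c) ^ 2) r := by
  have hden : HasDerivAt (fun s : ℝ => s ^ 2 + c) (2 * r) r := by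
    simpa using (hasDerivAt_pow 2 r).add_const c
  refine ((hasDerivAt_id' r).div hden (by positivity)).congr_deriv ?_
  ring

lemma hasDerivAt_sq_div_two_mul_sq_add {c : ℝ} (hc : 0 < c) (r : ℝ) :
    HasDerivAt (fun s : ℝ => s ^ 2 / (2 * (s ^ 2 + c))) (c * r / (r ^ 2 + c) ^ 2) r := by
  have hden : HasDerivAt (fun s : ℝ => 2 * (s ^ 2 + c)) (2 * (2 * r)) r := by
    simpa using ((hasDerivAt_pow 2 r).add_const c).const_mul 2
  refine ((hasDerivAt_pow 2 r).div hden (by positivity)).congr_deriv ?_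
  field_simp
  ring

lemma four_sub_sq_div_sq_add_sq_add_four_mul_div_sq_add_sq (r : ℝ) :
    ((4 - r ^ 2) / (r ^ 2 + 4) ^ 2) ^ 2 + (4 * r / (r ^ 2 + 4) ^ 2) ^ 2 = 1 / (r ^ 2 + 4) ^ 2 := by
  field_simp
  ring

/-- The second radial conformal embedding of the Fubini–Study metric into flat `ℝ⁷`:
with `Ω = (r²+1)/(r²+4)`, `R = r/(r²+4)`, `Z = r²/(2(r²+4))`, one has
`R'² + Z'² = 1/(r²+4)² = Ω²a`, `R² = 4Ω²c` and `Z² = Ω²(b−c)`, where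
`a = 1/(1+r²)²`, `b = r²/(4(1+r²))`, `c = r²/(4(1+r²)²)`. -/
theorem fubini_study_second_conformal_embedding :
    ∀ r : ℝ,
      DifferentiableAt ℝ (fun s : ℝ => s / (s ^ 2 + 4)) r ∧
      DifferentiableAt ℝ (fun s : ℝ => s ^ 2 / (2 * (s ^ 2 + 4))) r ∧
      ((deriv (fun s : ℝ => s / (s ^ 2 + 4)) r) ^ 2
          + (deriv (fun s : ℝ => s ^ 2 / (2 * (s ^ 2 + 4))) r) ^ 2
          = 1 / (r ^ 2 + 4) ^ 2
        ∧ (1 / (r ^ 2 + 4) ^ 2 : ℝ)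
          = ((r ^ 2 + 1) / (r ^ 2 + 4)) ^ 2 * (1 / (1 + r ^ 2) ^ 2)) ∧
      (r / (r ^ 2 + 4)) ^ 2
        = 4 * ((r ^ 2 + 1) / (r ^ 2 + 4)) ^ 2 * (r ^ 2 / (4 * (1 + r ^ 2) ^ 2)) ∧
      (r ^ 2 / (2 * (r ^ 2 + 4))) ^ 2
        = ((r ^ 2 + 1) / (r ^ 2 + 4)) ^ 2
            * (r ^ 2 / (4 * (1 + r ^ 2)) - r ^ 2 / (4 * (1 + r ^ 2) ^ 2)) := by
  intro r
  have hR := hasDerivAt_div_sq_add four_pos r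
  have hZ := hasDerivAt_sq_div_two_mul_sq_add four_pos r
  refine ⟨hR.differentiableAt, hZ.differentiableAt, ⟨?speed, ?conformal_a⟩, ?conformal_c,
    ?conformal_b_sub_c⟩
  case speed =>
    rw [hR.deriv, hZ.deriv]
    exact four_sub_sq_div_sq_add_sq_add_four_mul_div_sq_add_sq r
  all_goals
    field_simp
    ring
end

section
/- Let I ⊆ ℝ be an open interval and let a, b, c : I → ℝ be differentiable functions with a > 0, c > 0 and b > c on I. Set h := (b − c)/4 and suppose D := a·(c + h) − (c·h' − h·c')²/(c·h) ≥ 0 on I. Let σ ∈ {−1, 1} and let Ω : I → ℝ be a positive differentiable function satisfying Ω'(r) = Ω(r)·(−c'(r) − h'(r) + σ·√(D(r)))/(2·(c(r) + h(r))) for all r ∈ I. Then the functions R := 2Ω√c and Z := 2Ω√h satisfy (R'(r))² + (Z'(r))² = a(r)·Ω(r)² for all r ∈ I. -/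
/-!
Writing `R = 2Ω√c` and `Z = 2Ω√h`, the speed `R'² + Z'²` is a quadratic polynomial in `Ω'`.
The ODE for `Ω` picks a root of `R'² + Z'² = aΩ²`: completing the square, this equation reads
`(2(c+h)Ω'/Ω + c' + h')² = D`, where `D` absorbs the Lagrange-type identity
`c'²/c + h'²/h − (c'+h')²/(c+h) = (ch' − hc')²/(ch(c+h))`.
-/

open Real

theorem HasDerivAt.two_mul_mul_sqrt {w f : ℝ → ℝ} {w' f' r : ℝ} (hw : HasDerivAt w w' r)
    (hf : HasDerivAt f f' r) (hfr : f r ≠ 0) :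
    HasDerivAt (fun s => 2 * w s * √(f s)) (2 * w' * √(f r) + 2 * w r * (f' / (2 * √(f r)))) r :=
  (hw.const_mul 2).mul (hf.sqrt hfr)

lemma sq_add_sq_two_mul_mul_sqrt_deriv (w w' x y x' y' : ℝ) (hx : 0 < x) (hy : 0 < y) :
    (2 * w' * √x + 2 * w * (x' / (2 * √x))) ^ 2 + (2 * w' * √y + 2 * w * (y' / (2 * √y))) ^ 2
      = 4 * w' ^ 2 * (x + y) + 4 * w * w' * (x' + y') + w ^ 2 * (x' ^ 2 / x + y' ^ 2 / y) := by
  obtain ⟨u, hu, rfl⟩ : ∃ u, 0 < u ∧ x = u ^ 2 := ⟨√x, sqrt_pos.2 hx, (sq_sqrt hx.le).symm⟩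
  obtain ⟨v, hv, rfl⟩ : ∃ v, 0 < v ∧ y = v ^ 2 := ⟨√y, sqrt_pos.2 hy, (sq_sqrt hy.le).symm⟩
  rw [sqrt_sq hu.le, sqrt_sq hv.le]
  field_simp
  ring

lemma div_add_div_sub_sq_add_div (x y x' y' : ℝ) (hx : x ≠ 0) (hy : y ≠ 0) (hxy : x + y ≠ 0) :
    x' ^ 2 / x + y' ^ 2 / y - (x' + y') ^ 2 / (x + y) = (x * y' - y * x') ^ 2 / (x * y * (x + y)) := by
  field_simp
  ring

lemma four_mul_sq_add_four_mul_of_eq_root (w w' s p D σ : ℝ) (hs : s ≠ 0) (hD : 0 ≤ D)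
    (hσ : σ = 1 ∨ σ = -1) (hw' : w' = w * (-p + σ * √D) / (2 * s)) :
    4 * w' ^ 2 * s + 4 * w * w' * p = w ^ 2 * (D - p ^ 2) / s := by
  have hσ2 : σ ^ 2 = 1 := by rcases hσ with rfl | rfl <;> norm_num
  have hsD : √D ^ 2 = D := sq_sqrt hD
  subst hw'
  field_simp
  linear_combination (4 * w ^ 2 * √D ^ 2) * hσ2 + 4 * w ^ 2 * hsD

lemma conformal_speed_sq_eq (A x y x' y' w w' σ : ℝ) (hx : 0 < x) (hy : 0 < y)
    (hD : 0 ≤ A * (x + y) - (x * y' - y * x') ^ 2 / (x * y)) (hσ : σ = 1 ∨ σ = -1)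
    (hw' : w' = w * (-x' - y' + σ * √(A * (x + y) - (x * y' - y * x') ^ 2 / (x * y)))
      / (2 * (x + y))) :
    (2 * w' * √x + 2 * w * (x' / (2 * √x))) ^ 2 + (2 * w' * √y + 2 * w * (y' / (2 * √y))) ^ 2
      = A * w ^ 2 := by
  have hxy : 0 < x + y := by positivity
  have hroot := four_mul_sq_add_four_mul_of_eq_root w w' (x + y) (x' + y') _ σ hxy.ne' hD hσ
    (by rw [hw']; ring)
  have hlagrange := div_add_div_sub_sq_add_div x y x' y' hx.ne' hy.ne' hxy.ne'
  rw [sq_add_sq_two_mul_mul_sqrt_deriv w w' x y x' y' hx hy, hroot, eq_add_of_sub_eq' hlagrange]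
  field_simp
  ring

theorem radial_conformal_embedding_formula_general
    (I : Set ℝ)
    (a b c : ℝ → ℝ)
    (hb : ∀ r ∈ I, DifferentiableAt ℝ b r)
    (hc : ∀ r ∈ I, DifferentiableAt ℝ c r)
    (hcpos : ∀ r ∈ I, 0 < c r)
    (hbc : ∀ r ∈ I, c r < b r)
    (hD : ∀ r ∈ I, 0 ≤ a r * (c r + (b r - c r) / 4)
        - (c r * deriv (fun s => (b s - c s) / 4) r
            - (b r - c r) / 4 * deriv c r) ^ 2
          / (c r * ((b r - c r) / 4)))
    (σ : ℝ) (hσ : σ = 1 ∨ σ = -1)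
    (Ω : ℝ → ℝ)
    (hΩ : ∀ r ∈ I, HasDerivAt Ω
      (Ω r * (-(deriv c r) - deriv (fun s => (b s - c s) / 4) r
          + σ * Real.sqrt (a r * (c r + (b r - c r) / 4)
            - (c r * deriv (fun s => (b s - c s) / 4) r
                - (b r - c r) / 4 * deriv c r) ^ 2
              / (c r * ((b r - c r) / 4))))
        / (2 * (c r + (b r - c r) / 4))) r) :
    ∀ r ∈ I,
      (deriv (fun s => 2 * Ω s * Real.sqrt (c s)) r) ^ 2
        + (deriv (fun s => 2 * Ω s * Real.sqrt ((b s - c s) / 4)) r) ^ 2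
      = a r * (Ω r) ^ 2 := by
  intro r hr
  have hcr : 0 < c r := hcpos r hr
  have hhr : 0 < (b r - c r) / 4 := by linarith [hbc r hr]
  have hcd := (hc r hr).hasDerivAt
  have hhd : HasDerivAt (fun s => (b s - c s) / 4) (deriv (fun s => (b s - c s) / 4) r) r :=
    (((hb r hr).sub (hc r hr)).div_const 4).hasDerivAt
  rw [((hΩ r hr).two_mul_mul_sqrt hcd hcr.ne').deriv,
    ((hΩ r hr).two_mul_mul_sqrt hhd hhr.ne').deriv]
  exact conformal_speed_sq_eq _ _ _ _ _ _ _ σ hcr hhr (hD r hr) hσ rfl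

/-- The general radial conformal embedding formula for Bianchi-IX type metrics
`g = a dr² + b(σ₁²+σ₂²) + c σ₃²`: on an open interval `I`, with `h = (b−c)/4`,
`D = a(c+h) − (c h' − h c')²/(c h) ≥ 0`, and `Ω > 0` solving
`Ω' = Ω(−c' − h' + σ√D)/(2(c+h))` for a sign `σ = ±1`, the functions
`R = 2Ω√c`, `Z = 2Ω√h` satisfy `R'² + Z'² = a Ω²`. -/
theorem radial_conformal_embedding_formula
    (I : Set ℝ) (hIopen : IsOpen I) (hIinterval : I.OrdConnected)
    (a b c : ℝ → ℝ)
    (ha : ∀ r ∈ I, DifferentiableAt ℝ a r)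
    (hb : ∀ r ∈ I, DifferentiableAt ℝ b r)
    (hc : ∀ r ∈ I, DifferentiableAt ℝ c r)
    (hapos : ∀ r ∈ I, 0 < a r)
    (hcpos : ∀ r ∈ I, 0 < c r)
    (hbc : ∀ r ∈ I, c r < b r)
    (hD : ∀ r ∈ I, 0 ≤ a r * (c r + (b r - c r) / 4)
        - (c r * deriv (fun s => (b s - c s) / 4) r
            - (b r - c r) / 4 * deriv c r) ^ 2
          / (c r * ((b r - c r) / 4)))
    (σ : ℝ) (hσ : σ = 1 ∨ σ = -1)
    (Ω : ℝ → ℝ) (hΩpos : ∀ r ∈ I, 0 < Ω r)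
    (hΩ : ∀ r ∈ I, HasDerivAt Ω
      (Ω r * (-(deriv c r) - deriv (fun s => (b s - c s) / 4) r
          + σ * Real.sqrt (a r * (c r + (b r - c r) / 4)
            - (c r * deriv (fun s => (b s - c s) / 4) r
                - (b r - c r) / 4 * deriv c r) ^ 2
              / (c r * ((b r - c r) / 4))))
        / (2 * (c r + (b r - c r) / 4))) r) :
    ∀ r ∈ I,
      (deriv (fun s => 2 * Ω s * Real.sqrt (c s)) r) ^ 2
        + (deriv (fun s => 2 * Ω s * Real.sqrt ((b s - c s) / 4)) r) ^ 2
      = a r * (Ω r) ^ 2 :=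
  radial_conformal_embedding_formula_general I a b c hb hc hcpos hbc hD σ hσ Ω hΩ
end

section
/- Let c > 0 and let t range over the set where e^{2ct} > 4c². Define w(t) = 4c²·e^{ct}/(e^{2ct} − 4c²) and u(t) = 2c·e^{2ct}/(e^{2ct} − 4c²). Then: (i) w and u are differentiable with w'(t) = −u(t)·w(t) + c·w(t) and u'(t) = −w(t)²; (ii) u(t) > w(t) > 0; (iii) the embedding condition holds: (2w'(t) − w(t)·u'(t)/u(t))² + (u'(t) − 2w(t)w'(t)/u(t) + w(t)²·u'(t)/u(t)²)²/(4(u(t)² − w(t)²)) = u(t)²·w(t)². -/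
/-- The singular-case solution `w` of the scalar-flat ASD LRS Bianchi-IX equations. -/
noncomputable def singW (c t : ℝ) : ℝ :=
  4 * c ^ 2 * Real.exp (c * t) / (Real.exp (2 * c * t) - 4 * c ^ 2)

/-- The singular-case solution `u` of the scalar-flat ASD LRS Bianchi-IX equations. -/
noncomputable def singU (c t : ℝ) : ℝ :=
  2 * c * Real.exp (2 * c * t) / (Real.exp (2 * c * t) - 4 * c ^ 2)

/-!
The system `w' = (c - u) w`, `u' = -w²` has the first integral `u² - w² - 2cu`, and the
explicit solution lies on its zero level `u² - w² = 2cu`. On that level the embedding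
condition is a polynomial identity: the first bracket equals `-uw` and the second vanishes.
Positivity of `u` then gives `u² - w² > 0`, hence `w < u`.
-/

open Real

theorem embedding_condition_of_sq_sub_sq_eq {c u w : ℝ} (hu : u ≠ 0)
    (hlevel : u ^ 2 - w ^ 2 = 2 * c * u) :
    (2 * (-u * w + c * w) - w * (-w ^ 2) / u) ^ 2
      + ((-w ^ 2) - 2 * w * (-u * w + c * w) / u + w ^ 2 * (-w ^ 2) / u ^ 2) ^ 2
        / (4 * (u ^ 2 - w ^ 2))
      = u ^ 2 * w ^ 2 := by
  have hfirst : 2 * (-u * w + c * w) - w * (-w ^ 2) / u = -(u * w) := by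
    field_simp
    linear_combination -w * hlevel
  have hsecond : (-w ^ 2) - 2 * w * (-u * w + c * w) / u + w ^ 2 * (-w ^ 2) / u ^ 2 = 0 := by
    field_simp
    linear_combination w ^ 2 * hlevel
  rw [hfirst, hsecond]
  ring

theorem exp_two_mul_mul (c t : ℝ) : exp (2 * c * t) = exp (c * t) ^ 2 := by
  rw [← exp_nat_mul]
  push_cast
  ring_nf

theorem singU_sq_sub_singW_sq (c t : ℝ) : singU c t ^ 2 - singW c t ^ 2 = 2 * c * singU c t := by
  unfold singU singW
  rw [exp_two_mul_mul]
  rcases eq_or_ne (exp (c * t) ^ 2 - 4 * c ^ 2) 0 with hD | hD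
  · simp [hD]
  · rw [div_pow, div_pow, ← sub_div, div_eq_iff (pow_ne_zero 2 hD)]
    field_simp
    ring

theorem hasDerivAt_exp_const_mul (a t : ℝ) :
    HasDerivAt (fun s => exp (a * s)) (exp (a * t) * a) t := by
  simpa using ((hasDerivAt_id t).const_mul a).exp

theorem hasDerivAt_singW {c t : ℝ} (hD : exp (2 * c * t) - 4 * c ^ 2 ≠ 0) :
    HasDerivAt (singW c) (-(singU c t) * singW c t + c * singW c t) t := by
  refine (((hasDerivAt_exp_const_mul c t).const_mul (4 * c ^ 2)).div
    ((hasDerivAt_exp_const_mul (2 * c) t).sub_const (4 * c ^ 2)) hD).congr_deriv ?_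
  unfold singU singW
  field_simp
  ring

theorem hasDerivAt_singU {c t : ℝ} (hD : exp (2 * c * t) - 4 * c ^ 2 ≠ 0) :
    HasDerivAt (singU c) (-(singW c t) ^ 2) t := by
  refine (((hasDerivAt_exp_const_mul (2 * c) t).const_mul (2 * c)).div
    ((hasDerivAt_exp_const_mul (2 * c) t).sub_const (4 * c ^ 2)) hD).congr_deriv ?_
  unfold singW
  rw [exp_two_mul_mul] at hD ⊢
  field_simp
  ring

/-- For `c > 0`, on the region `e^{2ct} > 4c²`:
(i) `w' = −uw + cw` and `u' = −w²`; (ii) `u > w > 0`; (iii) the radial isometric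
embedding condition into flat `ℝ⁷` holds. This is the singular-case solution in the
proof that the Burns metric is, up to scale, the unique non-flat scalar-flat ASD LRS
Bianchi-IX metric admitting a radial isometric embedding in `ℝ⁷`. -/
theorem singular_case_embedding
    (c : ℝ) (hc : 0 < c) :
    ∀ t : ℝ, 4 * c ^ 2 < Real.exp (2 * c * t) →
      (HasDerivAt (singW c) (-(singU c t) * singW c t + c * singW c t) t ∧
       HasDerivAt (singU c) (-(singW c t) ^ 2) t) ∧
      (0 < singW c t ∧ singW c t < singU c t) ∧
      (2 * deriv (singW c) t - singW c t * deriv (singU c) t / singU c t) ^ 2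
        + (deriv (singU c) t - 2 * singW c t * deriv (singW c) t / singU c t
            + (singW c t) ^ 2 * deriv (singU c) t / (singU c t) ^ 2) ^ 2
          / (4 * ((singU c t) ^ 2 - (singW c t) ^ 2))
        = (singU c t) ^ 2 * (singW c t) ^ 2 := by
  intro t ht
  have hD : 0 < exp (2 * c * t) - 4 * c ^ 2 := sub_pos.mpr ht
  have hw' := hasDerivAt_singW hD.ne'
  have hu' := hasDerivAt_singU hD.ne'
  have hw : 0 < singW c t := by unfold singW; positivity
  have hu : 0 < singU c t := by unfold singU; positivity
  have hlevel := singU_sq_sub_singW_sq c t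
  have hwu : singW c t < singU c t :=
    (pow_lt_pow_iff_left₀ hw.le hu.le two_ne_zero).mp (by nlinarith [mul_pos hc hu])
  refine ⟨⟨hw', hu'⟩, ⟨hw, hwu⟩, ?_⟩
  rw [hw'.deriv, hu'.deriv]
  exact embedding_condition_of_sq_sub_sq_eq hu.ne' hlevel
end

section
/- For every real r, define R(r) = r/(1+r²), Z(r) = r²/(2(1+r²)), F(r) = √3/(2(1+r²)). Then: (i) R, Z, F are differentiable with (R'(r))² + (Z'(r))² + (F'(r))² = 1/(1+r²)²; (ii) R(r)² = 4·c(r) and Z(r)² = b(r) − c(r), where b(r) = r²/(4(1+r²)) and c(r) = r²/(4(1+r²)²); (iii) 2R(r)² + 4Z(r)² + (4/3)F(r)² = 1. -/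
/-! All three coordinates are rational functions of `r` over the denominator `1 + r²`, so every
identity reduces to a polynomial one; the metric identity (i) is `(1 - r²)² + 4r² = (1 + r²)²`. -/

lemma HasDerivAt.div_one_add_sq {f : ℝ → ℝ} {f' r : ℝ} (hf : HasDerivAt f f' r) :
    HasDerivAt (fun s => f s / (1 + s ^ 2))
      ((f' * (1 + r ^ 2) - f r * (2 * r)) / (1 + r ^ 2) ^ 2) r := by
  have hden : HasDerivAt (fun s : ℝ => 1 + s ^ 2) (2 * r) r := by
    simpa using ((hasDerivAt_id r).pow 2).const_add 1
  exact hf.div hden (by positivity)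

lemma hasDerivAt_id_div_one_add_sq (r : ℝ) :
    HasDerivAt (fun s : ℝ => s / (1 + s ^ 2)) ((1 - r ^ 2) / (1 + r ^ 2) ^ 2) r := by
  refine (hasDerivAt_id' r).div_one_add_sq.congr_deriv ?_
  ring

lemma hasDerivAt_sq_div_two_mul_one_add_sq (r : ℝ) :
    HasDerivAt (fun s : ℝ => s ^ 2 / (2 * (1 + s ^ 2))) (r / (1 + r ^ 2) ^ 2) r := by
  have hf : HasDerivAt (fun s : ℝ => s ^ 2 / 2) r r := by
    simpa using ((hasDerivAt_id r).pow 2).div_const 2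
  simp only [div_mul_eq_div_div]
  refine hf.div_one_add_sq.congr_deriv ?_
  ring

lemma hasDerivAt_const_div_two_mul_one_add_sq (c r : ℝ) :
    HasDerivAt (fun s : ℝ => c / (2 * (1 + s ^ 2))) (-(c * r) / (1 + r ^ 2) ^ 2) r := by
  simp only [div_mul_eq_div_div]
  refine (hasDerivAt_const r (c / 2)).div_one_add_sq.congr_deriv ?_
  ring

/-- The radial isometric embedding of the Fubini–Study metric into flat `ℝ⁸`:
with `R = r/(1+r²)`, `Z = r²/(2(1+r²))`, `F = √3/(2(1+r²))`, one has
(i) `R'² + Z'² + F'² = 1/(1+r²)²`; (ii) `R² = 4c`, `Z² = b − c` with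
`b = r²/(4(1+r²))`, `c = r²/(4(1+r²)²)`; (iii) `2R² + 4Z² + (4/3)F² = 1`,
so the image lies on a round seven-sphere. -/
theorem fubini_study_embedding_R8 :
    ∀ r : ℝ,
      (DifferentiableAt ℝ (fun s : ℝ => s / (1 + s ^ 2)) r ∧
       DifferentiableAt ℝ (fun s : ℝ => s ^ 2 / (2 * (1 + s ^ 2))) r ∧
       DifferentiableAt ℝ (fun s : ℝ => Real.sqrt 3 / (2 * (1 + s ^ 2))) r ∧
       (deriv (fun s : ℝ => s / (1 + s ^ 2)) r) ^ 2
         + (deriv (fun s : ℝ => s ^ 2 / (2 * (1 + s ^ 2))) r) ^ 2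
         + (deriv (fun s : ℝ => Real.sqrt 3 / (2 * (1 + s ^ 2))) r) ^ 2
         = 1 / (1 + r ^ 2) ^ 2) ∧
      ((r / (1 + r ^ 2)) ^ 2 = 4 * (r ^ 2 / (4 * (1 + r ^ 2) ^ 2)) ∧
       (r ^ 2 / (2 * (1 + r ^ 2))) ^ 2
         = r ^ 2 / (4 * (1 + r ^ 2)) - r ^ 2 / (4 * (1 + r ^ 2) ^ 2)) ∧
      2 * (r / (1 + r ^ 2)) ^ 2 + 4 * (r ^ 2 / (2 * (1 + r ^ 2))) ^ 2
        + (4 / 3) * (Real.sqrt 3 / (2 * (1 + r ^ 2))) ^ 2 = 1 := by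
  intro r
  have hR := hasDerivAt_id_div_one_add_sq r
  have hZ := hasDerivAt_sq_div_two_mul_one_add_sq r
  have hF := hasDerivAt_const_div_two_mul_one_add_sq (Real.sqrt 3) r
  have hden : 1 + r ^ 2 ≠ 0 := by positivity
  have hsqrt : Real.sqrt 3 ^ 2 = 3 := Real.sq_sqrt (by norm_num)
  refine ⟨⟨hR.differentiableAt, hZ.differentiableAt, hF.differentiableAt, ?_⟩, ⟨?_, ?_⟩, ?_⟩
  · rw [hR.deriv, hZ.deriv, hF.deriv]
    field_simp
    rw [hsqrt]
    ring
  · field_simp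
  · field_simp
    ring
  · field_simp
    rw [hsqrt]
    ring
end

section
/- Let 0 < a < r. Define R(r) = √(r⁴ − a⁴)/r and Z(r) = a²/(2r). Then R and Z are differentiable and (R'(r))² + (Z'(r))² − (3a⁴/(4r⁴))·(3r⁴ + a⁴)/(r⁴ − a⁴) = (1 − a⁴/r⁴)⁻¹. Moreover R(r)² = 4·c(r) and Z(r)² = b(r) − c(r), where b(r) = r²/4 and c(r) = (r²/4)·(1 − a⁴/r⁴). -/
/-!
With `u = r⁴ - a⁴`, one computes `R' = (r⁴ + a⁴)/(r²√u)` and `Z' = -a²/(2r²)`, so after clearing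
the denominator `4r⁴u` the speed identity becomes the polynomial identity
`4(r⁴ + a⁴)² + a⁴u - 3a⁴(3r⁴ + a⁴) = 4r⁸`.
-/

open Real

lemma hasDerivAt_sqrt_pow_four_sub_div {k r : ℝ} (hr : r ≠ 0) (hk : k < r ^ 4) :
    HasDerivAt (fun s : ℝ => √(s ^ 4 - k) / s) ((r ^ 4 + k) / (r ^ 2 * √(r ^ 4 - k))) r := by
  have hu : 0 < r ^ 4 - k := sub_pos.mpr hk
  have hpoly : HasDerivAt (fun s : ℝ => s ^ 4 - k) (4 * r ^ 3) r := by
    simpa using (hasDerivAt_pow 4 r).sub_const k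
  have hquot := ((hasDerivAt_sqrt hu.ne').comp r hpoly).div (hasDerivAt_id r) hr
  refine hquot.congr_deriv ?_
  have hsqrt : √(r ^ 4 - k) ^ 2 = r ^ 4 - k := sq_sqrt hu.le
  have : √(r ^ 4 - k) ≠ 0 := (sqrt_pos.mpr hu).ne'
  simp only [Function.comp_apply, id]
  field_simp
  linear_combination (-2) * hsqrt

lemma hasDerivAt_const_div_two_mul (c : ℝ) {r : ℝ} (hr : r ≠ 0) :
    HasDerivAt (fun s : ℝ => c / (2 * s)) (-c / (2 * r ^ 2)) r := by
  have hquot := (hasDerivAt_const r c).div ((hasDerivAt_id r).const_mul 2) (by simpa using hr)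
  refine hquot.congr_deriv ?_
  simp only [id]
  field_simp
  ring

lemma eguchi_hanson_speed_identity {a r : ℝ} (hr : r ≠ 0) (ha : a ^ 4 < r ^ 4) :
    ((r ^ 4 + a ^ 4) / (r ^ 2 * √(r ^ 4 - a ^ 4))) ^ 2 + (-a ^ 2 / (2 * r ^ 2)) ^ 2
        - 3 * a ^ 4 / (4 * r ^ 4) * (3 * r ^ 4 + a ^ 4) / (r ^ 4 - a ^ 4)
      = (1 - a ^ 4 / r ^ 4)⁻¹ := by
  have hu : 0 < r ^ 4 - a ^ 4 := sub_pos.mpr ha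
  have hsqrt : √(r ^ 4 - a ^ 4) ^ 2 = r ^ 4 - a ^ 4 := sq_sqrt hu.le
  have : √(r ^ 4 - a ^ 4) ≠ 0 := (sqrt_pos.mpr hu).ne'
  have : r ^ 4 - a ^ 4 ≠ 0 := hu.ne'
  rw [div_pow, mul_pow, hsqrt, inv_eq_one_div]
  field_simp
  ring

lemma sq_sqrt_pow_four_sub_div {k r : ℝ} (hk : k ≤ r ^ 4) :
    (√(r ^ 4 - k) / r) ^ 2 = 4 * ((r ^ 2 / 4) * (1 - k / r ^ 4)) := by
  rcases eq_or_ne r 0 with rfl | hr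
  · simp
  rw [div_pow, sq_sqrt (sub_nonneg.mpr hk)]
  field_simp

lemma sq_div_two_mul_eq_sub (a r : ℝ) :
    (a ^ 2 / (2 * r)) ^ 2 = r ^ 2 / 4 - (r ^ 2 / 4) * (1 - a ^ 4 / r ^ 4) := by
  rcases eq_or_ne r 0 with rfl | hr
  · simp
  field_simp
  ring

/-- The radial isometric embedding of the Eguchi–Hanson metric into flat `ℝ⁸` of
signature `(7,1)`: for `0 < a < r`, with `R = √(r⁴−a⁴)/r` and `Z = a²/(2r)`,
one has `R'² + Z'² − (3a⁴/(4r⁴))(3r⁴+a⁴)/(r⁴−a⁴) = (1 − a⁴/r⁴)⁻¹`,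
`R² = 4c` and `Z² = b − c`, where `b = r²/4`, `c = (r²/4)(1 − a⁴/r⁴)`. -/
theorem eguchi_hanson_embedding_R8
    (a : ℝ) (ha : 0 < a) :
    ∀ r : ℝ, a < r →
      (DifferentiableAt ℝ (fun s : ℝ => Real.sqrt (s ^ 4 - a ^ 4) / s) r ∧
       DifferentiableAt ℝ (fun s : ℝ => a ^ 2 / (2 * s)) r ∧
       (deriv (fun s : ℝ => Real.sqrt (s ^ 4 - a ^ 4) / s) r) ^ 2
         + (deriv (fun s : ℝ => a ^ 2 / (2 * s)) r) ^ 2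
         - (3 * a ^ 4 / (4 * r ^ 4)) * (3 * r ^ 4 + a ^ 4) / (r ^ 4 - a ^ 4)
         = (1 - a ^ 4 / r ^ 4)⁻¹) ∧
      (Real.sqrt (r ^ 4 - a ^ 4) / r) ^ 2
        = 4 * ((r ^ 2 / 4) * (1 - a ^ 4 / r ^ 4)) ∧
      (a ^ 2 / (2 * r)) ^ 2
        = r ^ 2 / 4 - (r ^ 2 / 4) * (1 - a ^ 4 / r ^ 4) := by
  intro r har
  have hr : r ≠ 0 := (ha.trans har).ne'
  have ha4 : a ^ 4 < r ^ 4 := pow_lt_pow_left₀ har ha.le (by norm_num)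
  have hR := hasDerivAt_sqrt_pow_four_sub_div hr ha4
  have hZ := hasDerivAt_const_div_two_mul (a ^ 2) hr
  refine ⟨⟨hR.differentiableAt, hZ.differentiableAt, ?_⟩,
    sq_sqrt_pow_four_sub_div ha4.le, sq_div_two_mul_eq_sub a r⟩
  rw [hR.deriv, hZ.deriv]
  exact eguchi_hanson_speed_identity hr ha4
end

section
/- Let 0 < m < r. Define R(r) = 2m·√((r−m)/(r+m)) and Z(r) = ((r−m)/2)·√((r+3m)/(r+m)). Then R and Z are differentiable and (R'(r))² + (Z'(r))² + (2mr³ + 9m²r² + 24m³r + 29m⁴)/(4(r+m)³(r+3m)) = (r+m)/(4(r−m)). Moreover R(r)² = 4·c(r) and Z(r)² = b(r) − c(r), where b(r) = (r² − m²)/4 and c(r) = m²·(r−m)/(r+m). -/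
/-! Both profile functions have the form `p s * √(q s)` with `p`, `q` rational and `q > 0`, so
`(p √q)' = (2 p' q + p q') / (2 √q)` and its square `(2 p' q + p q')² / (4 q)` is rational.
The embedding equations thereby reduce to identities between rational functions of `r` and `m`. -/

open Real

theorem HasDerivAt.mul_sqrt {p q : ℝ → ℝ} {p' q' x : ℝ} (hp : HasDerivAt p p' x)
    (hq : HasDerivAt q q' x) (hqx : 0 < q x) :
    HasDerivAt (fun s => p s * √(q s)) ((2 * p' * q x + p x * q') / (2 * √(q x))) x := by
  refine (hp.fun_mul (hq.sqrt hqx.ne')).congr_deriv ?_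
  have hsq : √(q x) ≠ 0 := (sqrt_pos.2 hqx).ne'
  field_simp
  rw [sq_sqrt hqx.le]
  ring

theorem div_two_mul_sqrt_sq (a : ℝ) {b : ℝ} (hb : 0 ≤ b) :
    (a / (2 * √b)) ^ 2 = a ^ 2 / (4 * b) := by
  rw [div_pow, mul_pow, sq_sqrt hb]
  norm_num

theorem taubNut_radial_coefficient_identity {m r : ℝ} (hm : 0 < m) (hr : m < r) :
    4 * m ^ 4 / ((r + m) ^ 3 * (r - m))
      + (r ^ 2 + 3 * m * r + 4 * m ^ 2) ^ 2 / (4 * (r + m) ^ 3 * (r + 3 * m))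
      + (2 * m * r ^ 3 + 9 * m ^ 2 * r ^ 2 + 24 * m ^ 3 * r + 29 * m ^ 4)
          / (4 * (r + m) ^ 3 * (r + 3 * m))
      = (r + m) / (4 * (r - m)) := by
  have hrm : 0 < r - m := by linarith
  have hrp : 0 < r + m := by linarith
  have hr3 : 0 < r + 3 * m := by linarith
  rw [add_assoc, ← add_div, div_add_div _ _ (by positivity) (by positivity),
    div_eq_div_iff (by positivity) (by positivity)]
  ring

/-- The radial isometric embedding of the anti-self-dual Taub-NUT metric into flat
Euclidean `ℝ⁸`: for `0 < m < r`, with `R = 2m√((r−m)/(r+m))` and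
`Z = ((r−m)/2)√((r+3m)/(r+m))`, one has
`R'² + Z'² + (2mr³+9m²r²+24m³r+29m⁴)/(4(r+m)³(r+3m)) = (r+m)/(4(r−m))`,
`R² = 4c` and `Z² = b − c`, where `b = (r²−m²)/4`, `c = m²(r−m)/(r+m)`. -/
theorem taub_nut_embedding_R8
    (m : ℝ) (hm : 0 < m) :
    ∀ r : ℝ, m < r →
      (DifferentiableAt ℝ (fun s : ℝ => 2 * m * Real.sqrt ((s - m) / (s + m))) r ∧
       DifferentiableAt ℝ
         (fun s : ℝ => ((s - m) / 2) * Real.sqrt ((s + 3 * m) / (s + m))) r ∧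
       (deriv (fun s : ℝ => 2 * m * Real.sqrt ((s - m) / (s + m))) r) ^ 2
         + (deriv (fun s : ℝ =>
             ((s - m) / 2) * Real.sqrt ((s + 3 * m) / (s + m))) r) ^ 2
         + (2 * m * r ^ 3 + 9 * m ^ 2 * r ^ 2 + 24 * m ^ 3 * r + 29 * m ^ 4)
             / (4 * (r + m) ^ 3 * (r + 3 * m))
         = (r + m) / (4 * (r - m))) ∧
      (2 * m * Real.sqrt ((r - m) / (r + m))) ^ 2
        = 4 * (m ^ 2 * (r - m) / (r + m)) ∧
      (((r - m) / 2) * Real.sqrt ((r + 3 * m) / (r + m))) ^ 2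
        = (r ^ 2 - m ^ 2) / 4 - m ^ 2 * (r - m) / (r + m) := by
  intro r hr
  have hrm : 0 < r - m := by linarith
  have hrp : 0 < r + m := by linarith
  have hq₁ : 0 < (r - m) / (r + m) := div_pos hrm hrp
  have hr3 : 0 < r + 3 * m := by linarith
  have hq₂ : 0 < (r + 3 * m) / (r + m) := div_pos hr3 hrp
  have hR : HasDerivAt (fun s => 2 * m * √((s - m) / (s + m))) _ r :=
    (hasDerivAt_const r (2 * m)).mul_sqrt
      (((hasDerivAt_id' r).sub_const m).div ((hasDerivAt_id' r).add_const m) hrp.ne') hq₁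
  have hZ : HasDerivAt (fun s => (s - m) / 2 * √((s + 3 * m) / (s + m))) _ r :=
    (((hasDerivAt_id' r).sub_const m).div_const 2).mul_sqrt
      (((hasDerivAt_id' r).add_const (3 * m)).div ((hasDerivAt_id' r).add_const m) hrp.ne') hq₂
  have hR' : deriv (fun s => 2 * m * √((s - m) / (s + m))) r ^ 2
      = 4 * m ^ 4 / ((r + m) ^ 3 * (r - m)) := by
    rw [hR.deriv, div_two_mul_sqrt_sq _ hq₁.le]
    field_simp
    ring
  have hZ' : deriv (fun s => (s - m) / 2 * √((s + 3 * m) / (s + m))) r ^ 2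
      = (r ^ 2 + 3 * m * r + 4 * m ^ 2) ^ 2 / (4 * (r + m) ^ 3 * (r + 3 * m)) := by
    rw [hZ.deriv, div_two_mul_sqrt_sq _ hq₂.le]
    field_simp
    ring
  refine ⟨⟨hR.differentiableAt, hZ.differentiableAt, ?_⟩, ?_, ?_⟩
  · rw [hR', hZ', taubNut_radial_coefficient_identity hm hr]
  · rw [mul_pow, sq_sqrt hq₁.le]
    ring
  · rw [mul_pow, sq_sqrt hq₂.le]
    field_simp
    ring
end
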